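/- Fix n ≥ 1 and let σ = cone(e₁, …, e_{2n}) ⊆ ℝ^{2n} be the nonnegative orthant. Set e_{2n+1} = (1/3)(1,2,…,1,2) and e_{2n+2} = (1/3)(2,1,…,2,1). Then every point x ∈ σ lies in at least one of the cones σ_{i,j} = cone(e₁,…,ê_{2i},…,ê_{2j-1},…,e_{2n}, e_{2n+1}, e_{2n+2}), σ'_i = cone(e₁,…,ê_{2i},…,e_{2n}, e_{2n+2}), or σ''_j = cone(e₁,…,ê_{2j-1},…,e_{2n}, e_{2n+1}) (for i, j ∈ {1,…,n}), where a hat denotes omission. That is, these cones cover σ. -/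

import Mathlib

/-! Let `a` and `b` be the smallest coordinates of `x` at odd and at even positions (numbered
from `1`). A combination `s • e_{2n+1} + t • e_{2n+2}` is the alternating vector
`((s + 2t)/3, (2s + t)/3, …)`. If it lies below `x`, subtracting it leaves a nonnegative vector,
which vanishes wherever the combination meets `x`. If `2a < b` take `(s, t) = (3a, 0)`, which
meets `x` at an odd minimiser; if `2b < a` take `(0, 3b)`, meeting it at an even minimiser;
otherwise `(2b - a, 2a - b)`, which subtracts exactly `(a, b, a, b, …)` and meets both. -/

def alternating (m : ℕ) (p q : ℝ) : Fin m → ℝ := fun k => if k.1 % 2 = 0 then p else q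

section Alternating

variable {m : ℕ}

lemma smul_alternating (s p q : ℝ) :
    s • alternating m p q = alternating m (s * p) (s * q) := by
  funext k
  simp only [alternating, Pi.smul_apply, smul_eq_mul]
  split_ifs <;> rfl

lemma alternating_add (p q p' q' : ℝ) :
    alternating m p q + alternating m p' q' = alternating m (p + p') (q + q') := by
  funext k
  simp only [alternating, Pi.add_apply]
  split_ifs <;> rfl

lemma alternating_apply_two_mul {i : ℕ} (h : 2 * i < m) (p q : ℝ) :
    alternating m p q ⟨2 * i, h⟩ = p := by
  simp [alternating]

lemma alternating_apply_two_mul_add_one {i : ℕ} (h : 2 * i + 1 < m) (p q : ℝ) :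
    alternating m p q ⟨2 * i + 1, h⟩ = q := by
  simp [alternating, Nat.add_mod]

lemma alternating_le {x : Fin m → ℝ} {p q : ℝ}
    (hp : ∀ k : Fin m, k.1 % 2 = 0 → p ≤ x k) (hq : ∀ k : Fin m, k.1 % 2 = 1 → q ≤ x k) :
    alternating m p q ≤ x := by
  intro k
  rcases Nat.mod_two_eq_zero_or_one k.1 with hk | hk
  · simpa [alternating, hk] using hp k hk
  · simpa [alternating, hk] using hq k hk

end Alternating

lemma exists_forall_parity_le {n : ℕ} (hn : 1 ≤ n) (x : Fin (2 * n) → ℝ) {r : ℕ} (hr : r < 2) :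
    ∃ i : Fin n, ∀ k : Fin (2 * n), k.1 % 2 = r → x ⟨2 * i.1 + r, by omega⟩ ≤ x k := by
  obtain ⟨i, -, hi⟩ := Finset.exists_min_image Finset.univ
    (fun i : Fin n => x ⟨2 * i.1 + r, by omega⟩) ⟨⟨0, hn⟩, Finset.mem_univ _⟩
  refine ⟨i, fun k hk => ?_⟩
  have hk' : (⟨2 * (k.1 / 2) + r, by omega⟩ : Fin (2 * n)) = k := Fin.ext (by simp; omega)
  simpa only [hk'] using hi ⟨k.1 / 2, by omega⟩ (Finset.mem_univ _)

lemma exists_orthant_coeffs_of_le {ι : Type*} [Fintype ι] [DecidableEq ι] {x y : ι → ℝ}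
    (h : y ≤ x) :
    ∃ c : ι → ℝ, (∀ k, 0 ≤ c k) ∧ (∀ k, y k = x k → c k = 0) ∧
      x = (∑ k, c k • (Pi.single k 1 : ι → ℝ)) + y :=
  ⟨x - y, fun k => sub_nonneg.2 (h k), fun k hk => sub_eq_zero.2 hk.symm,
    by rw [← pi_eq_sum_univ', sub_add_cancel]⟩

/-- The cones `σ_{i,j}`, `σ'_i`, `σ''_j` (obtained from the nonnegative orthant
`σ = cone(e₁,…,e_{2n})` by removing `e_{2i}` and/or `e_{2j-1}` and adding
`e_{2n+1} = (1/3)(1,2,…,1,2)` and/or `e_{2n+2} = (1/3)(2,1,…,2,1)`) cover `σ`. -/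
theorem stmt_16 (n : ℕ) (hn : 1 ≤ n)
    (e₁ e₂ : Fin (2 * n) → ℝ)
    (he₁ : e₁ = fun i => if i.1 % 2 = 0 then 1 / 3 else 2 / 3)
    (he₂ : e₂ = fun i => if i.1 % 2 = 0 then 2 / 3 else 1 / 3)
    (x : Fin (2 * n) → ℝ) (hx : ∀ i, 0 ≤ x i) :
    (∃ i j : Fin n, ∃ c : Fin (2 * n) → ℝ, ∃ s t : ℝ,
      (∀ k, 0 ≤ c k) ∧ 0 ≤ s ∧ 0 ≤ t ∧
      c ⟨2 * i.1 + 1, by have := i.2; omega⟩ = 0 ∧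
      c ⟨2 * j.1, by have := j.2; omega⟩ = 0 ∧
      x = (∑ k, c k • (Pi.single k 1 : Fin (2 * n) → ℝ)) + s • e₁ + t • e₂) ∨
    (∃ i : Fin n, ∃ c : Fin (2 * n) → ℝ, ∃ t : ℝ,
      (∀ k, 0 ≤ c k) ∧ 0 ≤ t ∧
      c ⟨2 * i.1 + 1, by have := i.2; omega⟩ = 0 ∧
      x = (∑ k, c k • (Pi.single k 1 : Fin (2 * n) → ℝ)) + t • e₂) ∨
    (∃ j : Fin n, ∃ c : Fin (2 * n) → ℝ, ∃ t : ℝ,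
      (∀ k, 0 ≤ c k) ∧ 0 ≤ t ∧
      c ⟨2 * j.1, by have := j.2; omega⟩ = 0 ∧
      x = (∑ k, c k • (Pi.single k 1 : Fin (2 * n) → ℝ)) + t • e₁) := by
  replace he₁ : e₁ = alternating (2 * n) (1 / 3) (2 / 3) := he₁
  replace he₂ : e₂ = alternating (2 * n) (2 / 3) (1 / 3) := he₂
  obtain ⟨i, hi⟩ := exists_forall_parity_le hn x (r := 0) (by norm_num)
  obtain ⟨j, hj⟩ := exists_forall_parity_le hn x (r := 1) (by norm_num)
  set a := x ⟨2 * i.1, by omega⟩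
  set b := x ⟨2 * j.1 + 1, by omega⟩
  have ha : 0 ≤ a := hx _
  have hb : 0 ≤ b := hx _
  have hle {p q : ℝ} (hp : p ≤ a) (hq : q ≤ b) : alternating (2 * n) p q ≤ x :=
    alternating_le (fun k hk => hp.trans (hi k hk)) (fun k hk => hq.trans (hj k hk))
  rcases lt_or_ge (2 * a) b with hab | hab
  · have hy : (3 * a) • e₁ = alternating (2 * n) a (2 * a) := by
      rw [he₁, smul_alternating]; congr 1 <;> ring
    obtain ⟨c, hc, hc0, hxc⟩ := exists_orthant_coeffs_of_le (hle le_rfl hab.le)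
    exact .inr <| .inr ⟨i, c, 3 * a, hc, by positivity,
      hc0 _ (alternating_apply_two_mul _ _ _), hy ▸ hxc⟩
  rcases lt_or_ge (2 * b) a with hba | hba
  · have hy : (3 * b) • e₂ = alternating (2 * n) (2 * b) b := by
      rw [he₂, smul_alternating]; congr 1 <;> ring
    obtain ⟨c, hc, hc0, hxc⟩ := exists_orthant_coeffs_of_le (hle hba.le le_rfl)
    exact .inr <| .inl ⟨j, c, 3 * b, hc, by positivity,
      hc0 _ (alternating_apply_two_mul_add_one _ _ _), hy ▸ hxc⟩
  · have hy : (2 * b - a) • e₁ + (2 * a - b) • e₂ = alternating (2 * n) a b := by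
      rw [he₁, he₂, smul_alternating, smul_alternating, alternating_add]; congr 1 <;> ring
    obtain ⟨c, hc, hc0, hxc⟩ := exists_orthant_coeffs_of_le (hle le_rfl le_rfl)
    refine .inl ⟨j, i, c, 2 * b - a, 2 * a - b, hc, by linarith, by linarith,
      hc0 _ (alternating_apply_two_mul_add_one _ _ _), hc0 _ (alternating_apply_two_mul _ _ _), ?_⟩
    rw [add_assoc, hy]
    exact hxc
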